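/- In the Brylawski–Ziegler construction, let X be a covector support of M̂ (a union of cocircuits of M̂) contained in E ∪ A (i.e., X ∩ B = ∅), and let rk_{L̂} denote rank in the lattice of unions of cocircuits of M̂. Then rk_{L̂}(X) = rk_L(X ∩ E), where rk_L is the corresponding lattice rank in M. -/

import Mathlib

open Set Matroid
namespace NL
variable {γ : Type*}

/-- Rank of a set in a matroid: the max size of an independent subset. -/
noncomputable def rk (M : Matroid γ) (X : Set γ) : ℕ :=
  sSup {n | ∃ I, M.Indep I ∧ I ⊆ X ∧ I.ncard = n}

/-- A cocircuit: a minimal set meeting every base. -/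
def Cocircuit (M : Matroid γ) (D : Set γ) : Prop :=
  D ⊆ M.E ∧ (∀ B, M.IsBase B → (D ∩ B).Nonempty) ∧
    ∀ D' ⊂ D, ∃ B, M.IsBase B ∧ D' ∩ B = ∅

/-- A loop: an element contained in no independent set. -/
def MLoop (M : Matroid γ) (e : γ) : Prop := e ∈ M.E ∧ ¬ M.Indep {e}

/-- Parallel elements: distinct non-loops forming a dependent pair. -/
def MParallel (M : Matroid γ) (e f : γ) : Prop :=
  e ≠ f ∧ M.Indep {e} ∧ M.Indep {f} ∧ ¬ M.Indep {e, f}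

/-- Deletion of the set `X`. -/
noncomputable def mdelete (M : Matroid γ) (X : Set γ) : Matroid γ := M ↾ (M.E \ X)

/-- Contraction of the set `X`, defined by duality. -/
noncomputable def mcontract (M : Matroid γ) (X : Set γ) : Matroid γ := (M✶ ↾ (M✶.E \ X))✶

/-- `X` is a union of cocircuits of `M` (equivalently, the complement of a flat). -/
def UnionOfCocircuits (M : Matroid γ) (X : Set γ) : Prop :=
  ∃ S : Set (Set γ), (∀ D ∈ S, Cocircuit M D) ∧ X = ⋃₀ S

/-- The rank of `X` in the lattice of unions of cocircuits of `M` ordered by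
inclusion: the maximal length of a chain from `∅` to `X` in this lattice. -/
noncomputable def latticeRk (M : Matroid γ) (X : Set γ) : ℕ :=
  sSup {k | ∃ c : Fin (k+1) → Set γ, StrictMono c ∧ (∀ i, UnionOfCocircuits M (c i)) ∧
    c 0 = ∅ ∧ c (Fin.last k) = X}

/-!
The set `B = {n+r+1, …, 2n}` is a base of `M₂` consisting of loops of `M₁`, so an independent
set of `M̂` containing `B` must have `B` as its `M₂`-part; hence `M̂ ／ B = M₁ ／ B`. The cocircuits
of `M̂` avoiding `B` are therefore exactly the cocircuits of `M₁`, and below `X` the two lattices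
coincide. Unions of cocircuits are the complements of flats, and since every element of `M₁`
outside `E` is a loop or parallel to an element of `E`, intersecting with `E` identifies the flats
of `M₁` with those of `M₁ ↾ E = M`, the inverse being closure in `M₁`.
-/

lemma MParallel.symm {M : Matroid γ} {e f : γ} (h : MParallel M e f) : MParallel M f e :=
  ⟨h.1.symm, h.2.2.1, h.2.1, by rw [pair_comm]; exact h.2.2.2⟩

lemma MParallel.mem_closure {M : Matroid γ} {e f : γ} (h : MParallel M e f) :
    e ∈ M.closure {f} := by
  obtain ⟨hne, he, hf, hdep⟩ := h
  by_contra hcl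
  exact hdep ((hf.insert_indep_iff_of_notMem hne).2 ⟨he.subset_ground rfl, hcl⟩)

lemma MLoop.isLoop {M : Matroid γ} {e : γ} (h : MLoop M e) : M.IsLoop e :=
  singleton_dep.1 ⟨h.2, singleton_subset_iff.2 h.1⟩

lemma cocircuit_iff_isCocircuit {M : Matroid γ} {D : Set γ} :
    Cocircuit M D ↔ M.IsCocircuit D := by
  rw [isCocircuit_iff_minimal]
  refine ⟨fun ⟨_, hmeet, hmin⟩ ↦ ⟨hmeet, fun D' hD' hD'D ↦ ?_⟩,
    fun hD ↦ ⟨(isCocircuit_iff_minimal.2 hD).subset_ground, hD.prop, fun D' hD' ↦ ?_⟩⟩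
  · by_contra h
    obtain ⟨B, hB, hempty⟩ := hmin D' (ssubset_of_subset_not_subset hD'D h)
    exact (hD' B hB).ne_empty hempty
  · by_contra! h
    exact hD'.not_subset (hD.2 h hD'.subset)

lemma unionOfCocircuits_iff {M : Matroid γ} {X : Set γ} :
    UnionOfCocircuits M X ↔ ∃ S : Set (Set γ), (∀ D ∈ S, M.IsCocircuit D) ∧ X = ⋃₀ S := by
  simp only [UnionOfCocircuits, cocircuit_iff_isCocircuit]

lemma _root_.Matroid.IsCocircuit.isFlat_compl {M : Matroid γ} {D : Set γ} (hD : M.IsCocircuit D) :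
    M.IsFlat (M.E \ D) := by
  rw [isCocircuit_iff_minimal_compl_nonspanning] at hD
  refine isFlat_iff_closure_eq.2 <| (subset_closure _ _).antisymm' fun x hx ↦ ?_
  have hxE := M.closure_subset_ground _ hx
  refine ⟨hxE, fun hxD ↦ hD.prop ?_⟩
  have hspan : M.Spanning (insert x (M.E \ D)) := by
    by_contra h
    refine (hD.2 (show ¬ M.Spanning (M.E \ (D \ {x})) from ?_) sdiff_subset).not_ssubset
      (sdiff_singleton_ssubset.2 hxD)
    rwa [sdiff_sdiff_right, inter_eq_right.2 (singleton_subset_iff.2 hxE), union_singleton]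
  rwa [spanning_iff_closure_eq, closure_insert_eq_of_mem_closure hx,
    ← spanning_iff_closure_eq] at hspan

lemma _root_.Matroid.IsFlat.exists_isCocircuit {M : Matroid γ} {F : Set γ} {e : γ} (hF : M.IsFlat F)
    (he : e ∈ M.E \ F) : ∃ D, M.IsCocircuit D ∧ e ∈ D ∧ Disjoint D F := by
  obtain ⟨I, hI⟩ := M.exists_isBasis F
  have heI : e ∉ I := fun h ↦ he.2 (hI.subset h)
  have hIe : M.Indep (insert e I) := by
    rw [hI.indep.insert_indep_iff_of_notMem heI, hI.closure_eq_closure, hF.closure]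
    exact he
  obtain ⟨B, hB, hIB⟩ := hIe.exists_isBase_superset
  have heB : e ∈ B := hIB (mem_insert e I)
  refine ⟨M.E \ M.closure (B \ {e}), hB.compl_closure_sdiff_singleton_isCocircuit heB,
    ⟨he.1, hB.indep.notMem_closure_sdiff_of_mem heB⟩, disjoint_sdiff_left.mono_right ?_⟩
  rw [← hF.closure, ← hI.closure_eq_closure]
  exact M.closure_subset_closure (subset_sdiff_singleton ((subset_insert e I).trans hIB) heI)

lemma unionOfCocircuits_iff_isFlat_compl {M : Matroid γ} {X : Set γ} :
    UnionOfCocircuits M X ↔ X ⊆ M.E ∧ M.IsFlat (M.E \ X) := by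
  rw [unionOfCocircuits_iff]
  constructor
  · rintro ⟨S, hS, rfl⟩
    refine ⟨sUnion_subset fun D hD ↦ (hS D hD).subset_ground, isFlat_iff_closure_eq.2 <|
      (subset_closure _ _).antisymm' fun x hx ↦ ⟨M.closure_subset_ground _ hx, ?_⟩⟩
    rintro ⟨D, hD, hxD⟩
    have hsub : M.closure (M.E \ ⋃₀ S) ⊆ M.E \ D := by
      rw [← (hS D hD).isFlat_compl.closure]
      exact M.closure_subset_closure (sdiff_subset_sdiff_right (subset_sUnion_of_mem hD))
    exact (hsub hx).2 hxD
  · rintro ⟨hXE, hF⟩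
    refine ⟨{D | M.IsCocircuit D ∧ D ⊆ X}, fun D hD ↦ hD.1,
      (sUnion_subset fun D hD ↦ hD.2).antisymm' fun e heX ↦ ?_⟩
    obtain ⟨D, hD, heD, hDF⟩ := hF.exists_isCocircuit ⟨hXE heX, fun h ↦ h.2 heX⟩
    refine ⟨D, ⟨hD, fun x hxD ↦ ?_⟩, heD⟩
    by_contra hxX
    exact hDF.notMem_of_mem_left hxD ⟨hD.subset_ground hxD, hxX⟩

lemma unionOfCocircuits_empty (M : Matroid γ) : UnionOfCocircuits M ∅ :=
  ⟨∅, fun _ h ↦ h.elim, sUnion_empty.symm⟩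

lemma exists_chain_map {β : Type*} {M : Matroid γ} {N : Matroid β} {X : Set γ}
    {f : Set γ → Set β} {g : Set β → Set γ} (hf : Monotone f) (hf0 : f ∅ = ∅)
    (hfg : ∀ Y ⊆ X, UnionOfCocircuits M Y → UnionOfCocircuits N (f Y) ∧ g (f Y) = Y) {k : ℕ}
    (hk : ∃ c : Fin (k+1) → Set γ, StrictMono c ∧ (∀ i, UnionOfCocircuits M (c i)) ∧
      c 0 = ∅ ∧ c (Fin.last k) = X) :
    ∃ c : Fin (k+1) → Set β, StrictMono c ∧ (∀ i, UnionOfCocircuits N (c i)) ∧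
      c 0 = ∅ ∧ c (Fin.last k) = f X := by
  obtain ⟨c, hc, hcU, hc0, hcX⟩ := hk
  have hcfg i := hfg (c i) (hcX ▸ hc.monotone (Fin.le_last i)) (hcU i)
  refine ⟨f ∘ c, (hf.comp hc.monotone).strictMono_of_injective fun i j hij ↦ hc.injective ?_,
    fun i ↦ (hcfg i).1, by simp [hc0, hf0], by simp [hcX]⟩
  rw [← (hcfg i).2, ← (hcfg j).2]
  exact congrArg g hij

lemma latticeRk_eq_of_inverse {β : Type*} {M : Matroid γ} {N : Matroid β} {X : Set γ}
    {f : Set γ → Set β} {g : Set β → Set γ} (hf : Monotone f) (hg : Monotone g)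
    (hf0 : f ∅ = ∅) (hX : UnionOfCocircuits M X)
    (hfg : ∀ Y ⊆ X, UnionOfCocircuits M Y → UnionOfCocircuits N (f Y) ∧ g (f Y) = Y)
    (hgf : ∀ Z ⊆ f X, UnionOfCocircuits N Z → UnionOfCocircuits M (g Z) ∧ f (g Z) = Z) :
    latticeRk M X = latticeRk N (f X) := by
  have hg0 : g ∅ = ∅ := by simpa [hf0] using (hfg ∅ (empty_subset X) (unionOfCocircuits_empty M)).2
  have hgfX : g (f X) = X := (hfg X subset_rfl hX).2
  unfold latticeRk
  congr 1
  ext k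
  exact ⟨exists_chain_map hf hf0 hfg, fun hk ↦ hgfX ▸ exists_chain_map hg hg0 hgf hk⟩

lemma unionOfCocircuits_of_contract_eq {N₁ N₂ : Matroid γ} {C Y : Set γ} (h : N₁ ／ C = N₂ ／ C)
    (hYC : Disjoint Y C) (hY : UnionOfCocircuits N₁ Y) : UnionOfCocircuits N₂ Y := by
  rw [unionOfCocircuits_iff] at hY ⊢
  obtain ⟨S, hS, rfl⟩ := hY
  refine ⟨S, fun D hD ↦ ?_, rfl⟩
  have hDC : Disjoint D C := hYC.mono_left (subset_sUnion_of_mem hD)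
  have hD₁ : (N₁ ／ C).IsCocircuit D := contract_isCocircuit_iff.2 ⟨hS D hD, hDC⟩
  rw [h, contract_isCocircuit_iff] at hD₁
  exact hD₁.1

lemma latticeRk_eq_of_contract_eq {N₁ N₂ : Matroid γ} {C X : Set γ} (h : N₁ ／ C = N₂ ／ C)
    (hX : UnionOfCocircuits N₁ X) (hXC : Disjoint X C) : latticeRk N₁ X = latticeRk N₂ X :=
  latticeRk_eq_of_inverse (f := id) (g := id) monotone_id monotone_id rfl hX
    (fun _ hY hY₁ ↦ ⟨unionOfCocircuits_of_contract_eq h (hXC.mono_left hY) hY₁, rfl⟩)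
    (fun _ hZ hZ₂ ↦ ⟨unionOfCocircuits_of_contract_eq h.symm (hXC.mono_left hZ) hZ₂, rfl⟩)

lemma _root_.Matroid.IsFlat.closure_inter_eq {N : Matroid γ} {R F : Set γ}
    (hR : ∀ x ∈ N.E, x ∈ N.closure (N.closure {x} ∩ R)) (hF : N.IsFlat F) :
    N.closure (F ∩ R) = F := by
  refine ((N.closure_subset_closure inter_subset_left).trans hF.closure.subset).antisymm
    fun x hx ↦ N.closure_subset_closure (inter_subset_inter_left R ?_) (hR x (hF.subset_ground hx))
  exact hF.closure ▸ N.closure_subset_closure (singleton_subset_iff.2 hx)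

-- The hypothesis on `R` holds when every element outside `R` is a loop or parallel to an element
-- of `R`; it makes `F ↦ F ∩ R` a bijection from the flats of `N` to those of `N ↾ R`.
lemma latticeRk_restrict {N : Matroid γ} {R X : Set γ} (hRE : R ⊆ N.E)
    (hR : ∀ x ∈ N.E, x ∈ N.closure (N.closure {x} ∩ R)) (hX : UnionOfCocircuits N X) :
    latticeRk N X = latticeRk (N ↾ R) (X ∩ R) := by
  have hcompl (K : Set γ) : (N.E \ K) ∩ R = R \ (K ∩ R) := by
    ext x; have := @hRE x; simp only [mem_inter_iff, mem_sdiff]; tauto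
  refine latticeRk_eq_of_inverse (g := fun Z ↦ N.E \ N.closure (R \ Z))
    (fun _ _ h ↦ inter_subset_inter_left R h)
    (fun _ _ h ↦ sdiff_subset_sdiff_right (N.closure_subset_closure (sdiff_subset_sdiff_right h)))
    (empty_inter R) hX (fun Y _ hY ↦ ?_) (fun Z _ hZ ↦ ?_)
  · rw [unionOfCocircuits_iff_isFlat_compl] at hY ⊢
    obtain ⟨hYE, hF⟩ := hY
    have hFR : N.closure (R \ (Y ∩ R)) = N.E \ Y := by
      rw [← hcompl, hF.closure_inter_eq hR]
    refine ⟨⟨inter_subset_right, isFlat_iff_closure_eq.2 ?_⟩,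
      by rw [hFR, sdiff_sdiff_cancel_left hYE]⟩
    rw [restrict_ground_eq, restrict_closure_eq _ sdiff_subset hRE, hFR, hcompl]
  · rw [unionOfCocircuits_iff_isFlat_compl, restrict_ground_eq, isFlat_iff_closure_eq,
      restrict_closure_eq _ sdiff_subset hRE] at hZ
    obtain ⟨hZR, hG⟩ := hZ
    refine ⟨unionOfCocircuits_iff_isFlat_compl.2 ⟨sdiff_subset, ?_⟩, ?_⟩
    · rw [sdiff_sdiff_cancel_left (N.closure_subset_ground _)]
      exact N.isFlat_closure _
    · rw [hcompl, hG, sdiff_sdiff_cancel_left hZR]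

lemma _root_.Matroid.IsBase.isBase_of_subset_closure_of_encard_le {M : Matroid γ} {B J : Set γ}
    (hB : M.IsBase B) (hJ : J.Finite) (hBJ : B ⊆ M.closure J) (hJB : J.encard ≤ B.encard) :
    M.IsBase J := by
  have hJi : M.Indep J := by
    rw [indep_iff_eRk_eq_encard_of_finite hJ]
    refine (M.eRk_le_encard J).antisymm (hJB.trans ?_)
    rw [← hB.indep.eRk_eq_encard, ← M.eRk_closure_eq J]
    exact M.eRk_mono hBJ
  refine hJi.isBase_of_spanning ((spanning_iff_ground_subset_closure hJi.subset_ground).2 ?_)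
  exact hB.spanning.closure_eq ▸ M.closure_subset_closure_of_subset_closure hBJ

lemma isBase_image_of_mParallel {M : Matroid γ} {B : Set γ} {φ : γ → γ} (hB : M.IsBase B)
    (hfin : B.Finite) (hφ : InjOn φ B) (hpar : ∀ i ∈ B, MParallel M i (φ i)) :
    M.IsBase (φ '' B) :=
  hB.isBase_of_subset_closure_of_encard_le (hfin.image φ)
    (fun i hi ↦ M.closure_subset_closure (singleton_subset_iff.2 (mem_image_of_mem φ hi))
      (hpar i hi).mem_closure)
    hφ.encard_image.le

lemma contract_eq_of_isBase_of_subset_loops {M M₁ M₂ : Matroid γ} (hE : M.E = M₁.E)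
    (hU : ∀ I, M.Indep I ↔ ∃ I₁ I₂, M₁.Indep I₁ ∧ M₂.Indep I₂ ∧ I = I₁ ∪ I₂) {C : Set γ}
    (hC₁ : C ⊆ M₁.loops) (hC₂ : M₂.IsBase C) : M ／ C = M₁ ／ C := by
  have hC : M.Indep C := (hU C).2 ⟨∅, C, M₁.empty_indep, hC₂.indep, (empty_union C).symm⟩
  refine ext_indep (by simp [hE]) fun I _ ↦ ?_
  rw [hC.contract_indep_iff, contract_eq_delete_of_subset_loops hC₁, delete_indep_iff, and_comm,
    hU]
  refine and_congr_left fun hIC ↦ ⟨?_, fun hI ↦ ⟨I, C, hI, hC₂.indep, rfl⟩⟩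
  rintro ⟨I₁, I₂, hI₁, hI₂, hIC₁₂⟩
  -- `C` consists of loops of `M₁`, so it lies in `I₂`, which is then the base `C` itself.
  have hCI₂ : C ⊆ I₂ := fun c hc ↦ ((hIC₁₂.subset (subset_union_right hc)).resolve_left
    fun h ↦ hI₁.disjoint_loops.notMem_of_mem_left h (hC₁ hc))
  obtain rfl := hC₂.eq_of_subset_indep hI₂ hCI₂
  exact hI₁.subset fun x hx ↦ (hIC₁₂.subset (subset_union_left hx)).resolve_right
    (hIC.notMem_of_mem_left hx)

lemma mem_closure_closure_singleton_inter_Icc {N : Matroid ℕ} {n : ℕ} (hE : N.E = Icc 1 (2*n))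
    (h : ∀ i ∈ Icc 1 n, MParallel N i (n+i) ∨ MLoop N (n+i)) :
    ∀ x ∈ N.E, x ∈ N.closure (N.closure {x} ∩ Icc 1 n) := by
  intro x hx
  have hx' : x ∈ Icc 1 (2*n) := hE ▸ hx
  have of_mem_closure {e : ℕ} (he : e ∈ Icc 1 n) (hex : e ∈ N.closure {x})
      (hxe : x ∈ N.closure {e}) : x ∈ N.closure (N.closure {x} ∩ Icc 1 n) :=
    N.closure_subset_closure (singleton_subset_iff.2 (mem_inter hex he)) hxe
  obtain hxn | hxn := le_or_gt x n
  · have hxx := N.mem_closure_of_mem' (mem_singleton x) hx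
    exact of_mem_closure ⟨hx'.1, hxn⟩ hxx hxx
  obtain ⟨i, hi, rfl⟩ : ∃ i ∈ Icc 1 n, n + i = x :=
    ⟨x - n, by simp only [mem_Icc] at hx' ⊢; omega, by omega⟩
  rcases h i hi with hpar | hloop
  · exact of_mem_closure hi hpar.mem_closure hpar.symm.mem_closure
  · exact hloop.isLoop.mem_closure _

lemma isBase_Icc_of_mParallel {N : Matroid ℕ} {n r : ℕ} (hspan : N.Spanning (Icc 1 n))
    (hB : (N ↾ Icc 1 n).IsBase (Icc (r+1) n)) (hpar : ∀ i ∈ Icc (r+1) n, MParallel N i (n+i)) :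
    N.IsBase (Icc (n+r+1) (2*n)) := by
  have hshift : (n + ·) '' Icc (r+1) n = Icc (n+r+1) (2*n) := by
    ext x
    simp only [mem_image, mem_Icc]
    exact ⟨by rintro ⟨i, hi, rfl⟩; omega, fun hx ↦ ⟨x - n, by omega, by omega⟩⟩
  rw [← hshift]
  exact isBase_image_of_mParallel (hspan.isBase_restrict_iff.1 hB).1 (finite_Icc _ _)
    (add_right_injective n).injOn hpar

theorem bz_lattice_rank_eq_general
    (n r : ℕ) (M M₁ M₂ Mhat : Matroid ℕ)
    (hME : M.E = Set.Icc 1 n) (hMB : M.IsBase (Set.Icc 1 r))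
    (hE1 : M₁.E = Set.Icc 1 (2*n)) (hres1 : M₁ ↾ (Set.Icc 1 n) = M)
    (hpar1 : ∀ i ∈ Set.Icc 1 r, MParallel M₁ i (n+i))
    (hloop1 : ∀ i ∈ Set.Icc (r+1) n, MLoop M₁ (n+i))
    (hE2 : M₂.E = Set.Icc 1 (2*n)) (hres2 : M₂ ↾ (Set.Icc 1 n) = M✶)
    (hpar2 : ∀ i ∈ Set.Icc (r+1) n, MParallel M₂ i (n+i))
    (hloop2 : ∀ i ∈ Set.Icc 1 r, MLoop M₂ (n+i))
    (hEh : Mhat.E = Set.Icc 1 (2*n))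
    (hU : ∀ I, Mhat.Indep I ↔ ∃ I₁ I₂, M₁.Indep I₁ ∧ M₂.Indep I₂ ∧ I = I₁ ∪ I₂)
    (X : Set ℕ) (hX : UnionOfCocircuits Mhat X)
    (hXB : X ∩ Set.Icc (n+r+1) (2*n) = ∅) :
    latticeRk Mhat X = latticeRk M (X ∩ Set.Icc 1 n) := by
  have hEE₁ : Icc 1 n ⊆ M₁.E := hE1 ▸ Icc_subset_Icc_right (by omega)
  have hEE₂ : Icc 1 n ⊆ M₂.E := hE2 ▸ Icc_subset_Icc_right (by omega)
  have hR₁ := mem_closure_closure_singleton_inter_Icc hE1 fun i hi ↦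
    if hir : i ≤ r then .inl (hpar1 i ⟨hi.1, hir⟩) else .inr (hloop1 i ⟨by omega, hi.2⟩)
  have hR₂ := mem_closure_closure_singleton_inter_Icc hE2 fun i hi ↦
    if hir : i ≤ r then .inr (hloop2 i ⟨hi.1, hir⟩) else .inl (hpar2 i ⟨by omega, hi.2⟩)
  have hspan₂ : M₂.Spanning (Icc 1 n) := (spanning_iff_ground_subset_closure hEE₂).2
    fun x hx ↦ M₂.closure_subset_closure inter_subset_right (hR₂ x hx)
  have hBdual : M✶.IsBase (Icc (r+1) n) := by
    have hcompl : Icc 1 n \ Icc 1 r = Icc (r+1) n := by ext; simp only [mem_sdiff, mem_Icc]; omega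
    simpa [hME, hcompl] using hMB.compl_isBase_dual
  have hB₂ := isBase_Icc_of_mParallel hspan₂ (hres2 ▸ hBdual) hpar2
  have hB₁ : Icc (n+r+1) (2*n) ⊆ M₁.loops := fun x hx ↦ by
    obtain ⟨i, hi, rfl⟩ : ∃ i ∈ Icc (r+1) n, n + i = x :=
      ⟨x - n, by simp only [mem_Icc] at hx ⊢; omega, by simp only [mem_Icc] at hx; omega⟩
    exact (hloop1 i hi).isLoop
  have hcon := contract_eq_of_isBase_of_subset_loops (hEh.trans hE1.symm) hU hB₁ hB₂
  have hXB' : Disjoint X (Icc (n+r+1) (2*n)) := disjoint_iff_inter_eq_empty.2 hXB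
  rw [latticeRk_eq_of_contract_eq hcon hX hXB', ← hres1]
  exact latticeRk_restrict hEE₁ hR₁ (unionOfCocircuits_of_contract_eq hcon hXB' hX)

/-- if `X` is a union of cocircuits of `M̂` with `X ∩ B = ∅`,
then its rank in the lattice of unions of cocircuits of `M̂` equals the lattice
rank of `X ∩ E` in the corresponding lattice of `M`. -/
theorem bz_lattice_rank_eq
    (n r : ℕ) (hrn : r ≤ n) (M M₁ M₂ Mhat : Matroid ℕ)
    (hME : M.E = Set.Icc 1 n) (hMB : M.IsBase (Set.Icc 1 r))
    (hE1 : M₁.E = Set.Icc 1 (2*n)) (hres1 : M₁ ↾ (Set.Icc 1 n) = M)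
    (hpar1 : ∀ i ∈ Set.Icc 1 r, MParallel M₁ i (n+i))
    (hloop1 : ∀ i ∈ Set.Icc (r+1) n, MLoop M₁ (n+i))
    (hE2 : M₂.E = Set.Icc 1 (2*n)) (hres2 : M₂ ↾ (Set.Icc 1 n) = M✶)
    (hpar2 : ∀ i ∈ Set.Icc (r+1) n, MParallel M₂ i (n+i))
    (hloop2 : ∀ i ∈ Set.Icc 1 r, MLoop M₂ (n+i))
    (hEh : Mhat.E = Set.Icc 1 (2*n))
    (hU : ∀ I, Mhat.Indep I ↔ ∃ I₁ I₂, M₁.Indep I₁ ∧ M₂.Indep I₂ ∧ I = I₁ ∪ I₂)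
    (X : Set ℕ) (hX : UnionOfCocircuits Mhat X)
    (hXB : X ∩ Set.Icc (n+r+1) (2*n) = ∅) :
    latticeRk Mhat X = latticeRk M (X ∩ Set.Icc 1 n) :=
  bz_lattice_rank_eq_general n r M M₁ M₂ Mhat hME hMB hE1 hres1 hpar1 hloop1 hE2 hres2 hpar2 hloop2
    hEh hU X hX hXB

end NL
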